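/- Let f ∈ k[[x,y]] with ν_A(f) ≥ δ₀ for some δ₀ > 0 (so f lies in the ideal (x_1,…,x_r)), set z′ = z + f, and define the z′-levels of ω by η′_s = Σ_{t≥s} C(t,s)·(−f)^{t−s}·η_t − Σ_{t≥s+1} C(t−1,s)·(−f)^{t−s−1}·h_t·df and h′_s = Σ_{t≥s} C(t−1,s−1)·(−f)^{t−s}·h_t (binomial coefficients C(·,·); the series converge in the maximal-adic topology), so that ω = Σ_s z′^s·(η′_s + h′_s·dz′/z′). Assume ω ≠ 0. Then: (1) for every δ with 0 < δ ≤ δ₀, min_s(sδ + min{ν_A(η_s), ν_A(h_s)}) = min_s(sδ + min{ν_A(η′_s), ν_A(h′_s)}); consequently the Newton polygons N and N′ of the two level families satisfy χ_{δ₀}(N) = χ_{δ₀}(N′) =: χ and λ_N(s) = λ_{N′}(s) for all s ≥ χ; (2) for every s ≥ χ, letting I_s be the unique multi-index with ν(x^{I_s}) = λ_N(s), the λ_N(s)-reduced vectors of the level s coincide for the two level families, i.e. the vectors in k^{r+1} of constant terms (at y = 0) of the coefficients of x^{I_s} in (f_{s1},…,f_{sr},h_s) and in (f′_{s1},…,f′_{sr},h′_s)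 are equal. -/

import Mathlib

noncomputable section
open MvPowerSeries Classical

section Core

variable {k : Type} [Field k] {σ : Type}

/-- Weighted value of an exponent. -/
def wtG (W : σ → ℝ) (e : σ →₀ ℕ) : ℝ := e.sum fun i m => (m : ℝ) * W i

/-- Explicit value of a formal power series. -/
def nuG (W : σ → ℝ) (f : MvPowerSeries σ k) : EReal :=
  sInf {v : EReal | ∃ e : σ →₀ ℕ, MvPowerSeries.coeff e f ≠ 0 ∧ v = ((wtG W e : ℝ) : EReal)}

/-- Derivative operators: `x·∂/∂x` for logarithmic variables, `∂/∂y` for plain ones. -/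
def DopG (isLog : σ → Bool) (b : σ) (f : MvPowerSeries σ k) : MvPowerSeries σ k :=
  fun e => if isLog b then (e b : k) * MvPowerSeries.coeff e f
    else ((e b : k) + 1) * MvPowerSeries.coeff (e + Finsupp.single b 1) f

/-- The differential of a function as a logarithmic 1-form. -/
def dFnG (isLog : σ → Bool) (f : MvPowerSeries σ k) : σ → MvPowerSeries σ k :=
  fun b => DopG isLog b f

/-- Explicit value of a logarithmic 1-form. -/
def nu1G (W : σ → ℝ) (ω : σ → MvPowerSeries σ k) : EReal := ⨅ b, nuG W (ω b)

/-- Wedge of two 1-forms, as an alternating 2-tensor. -/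
def w2G (α β : σ → MvPowerSeries σ k) : σ → σ → MvPowerSeries σ k :=
  fun a b => α a * β b - α b * β a

/-- Exterior derivative of a 1-form, as an alternating 2-tensor. -/
def dF1G (isLog : σ → Bool) (ω : σ → MvPowerSeries σ k) : σ → σ → MvPowerSeries σ k :=
  fun a b => DopG isLog a (ω b) - DopG isLog b (ω a)

/-- Explicit value of a 2-form. -/
def nu2G (W : σ → ℝ) (Ω : σ → σ → MvPowerSeries σ k) : EReal := ⨅ a, ⨅ b, nuG W (Ω a b)

/-- Wedge of a 1-form with a 2-form, as an alternating 3-tensor. -/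
def w12G (θ : σ → MvPowerSeries σ k) (Ω : σ → σ → MvPowerSeries σ k) :
    σ → σ → σ → MvPowerSeries σ k :=
  fun a b c => θ a * Ω b c - θ b * Ω a c + θ c * Ω a b

/-- Explicit value of a 3-form. -/
def nu3G (W : σ → ℝ) (T : σ → σ → σ → MvPowerSeries σ k) : EReal :=
  ⨅ a, ⨅ b, ⨅ c, nuG W (T a b c)

/-- `f` is dominant at its own explicit value: the value is realized by a monomial
purely in the distinguished (`isX`) variables. -/
def DomAtG (W : σ → ℝ) (isX : σ → Prop) (f : MvPowerSeries σ k) : Prop :=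
  ∃ e : σ →₀ ℕ, (∀ i, ¬ isX i → e i = 0) ∧ MvPowerSeries.coeff e f ≠ 0 ∧
    ((wtG W e : ℝ) : EReal) = nuG W f

/-- `f` is `γ`-final dominant. -/
def FinalDomFnG (W : σ → ℝ) (isX : σ → Prop) (γ : ℝ) (f : MvPowerSeries σ k) : Prop :=
  nuG W f ≤ (γ : EReal) ∧ DomAtG W isX f

/-- A 1-form is dominant at its own explicit value: realized by a `dx_i/x_i`-coefficient. -/
def Dom1AtG (W : σ → ℝ) (isX : σ → Prop) (ω : σ → MvPowerSeries σ k) : Prop :=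
  ∃ i, isX i ∧ nuG W (ω i) = nu1G W ω ∧ DomAtG W isX (ω i)

/-- A 1-form is `γ`-final dominant. -/
def FinalDom1G (W : σ → ℝ) (isX : σ → Prop) (γ : ℝ) (ω : σ → MvPowerSeries σ k) : Prop :=
  nu1G W ω ≤ (γ : EReal) ∧ Dom1AtG W isX ω

end Core

abbrev Idx (r n : ℕ) := Sum (Fin r) (Fin n)

/-- Positive convex hull: convex hull plus the positive quadrant. -/
def posHullSet (S : Set (ℝ × ℝ)) : Set (ℝ × ℝ) :=
  {p | ∃ c ∈ convexHull ℝ S, ∃ d : ℝ × ℝ, 0 ≤ d.1 ∧ 0 ≤ d.2 ∧ p = c + d}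

/-- A positively convex polygon: generated by a cloud of points of `ℝ_{≥0} × ℤ_{≥0}`. -/
def PosConvex (N : Set (ℝ × ℝ)) : Prop :=
  ∃ C : Set (ℝ × ℝ), (∀ q ∈ C, 0 ≤ q.1 ∧ ∃ m : ℕ, q.2 = (m : ℝ)) ∧ N = posHullSet C

/-- Abscissa of the polygon at height `s` (`∞` if the row is empty). -/
def lamN (N : Set (ℝ × ℝ)) (s : ℤ) : EReal :=
  sInf {v : EReal | ∃ l : ℝ, (l, (s : ℝ)) ∈ N ∧ v = (l : EReal)}

/-- Sharpness of the polygon at height `s`: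
`α_N(s) = λ_N(s−1) + λ_N(s+1) − 2λ_N(s)`, with the conventions `α_N(s) = 0` when
`λ_N(s) = ∞` and `α_N(s) = ∞` when `λ_N(s) < ∞` and `λ_N(s−1) = ∞`. -/
def sharpN (N : Set (ℝ × ℝ)) (s : ℤ) : EReal :=
  if lamN N s = ⊤ then 0
  else if lamN N (s - 1) = ⊤ then ⊤
  else lamN N (s - 1) + lamN N (s + 1) - 2 * lamN N s

/-- `ς_δ(N) = inf{a + δ·b : (a,b) ∈ N}`. -/
def sigN (N : Set (ℝ × ℝ)) (δ : ℝ) : EReal :=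
  sInf {v : EReal | ∃ p ∈ N, v = ((p.1 + δ * p.2 : ℝ) : EReal)}

/-- `χ_δ(N)`: the ordinate of the highest vertex on the critical line of slope `−1/δ`. -/
def chiN (N : Set (ℝ × ℝ)) (δ : ℝ) : ℕ :=
  sSup {s : ℕ | lamN N (s : ℤ) + ((δ * s : ℝ) : EReal) = sigN N δ}

/-- The cloud of points `(ν_A(z·ω_s), s)` of a level family. -/
def cloudLev {k : Type} [Field k] {r l : ℕ} (w : Fin r → ℝ)
    (eta : ℕ → Idx r l → MvPowerSeries (Idx r l) k)
    (h : ℕ → MvPowerSeries (Idx r l) k) : Set (ℝ × ℝ) :=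
  {p | ∃ s : ℕ, p.2 = (s : ℝ) ∧
    (p.1 : EReal) = min (nu1G (Sum.elim w fun _ => (0:ℝ)) (eta s))
      (nuG (Sum.elim w fun _ => (0:ℝ)) (h s))}

/-- The Newton polygon of a level family. -/
def NPLev {k : Type} [Field k] {r l : ℕ} (w : Fin r → ℝ)
    (eta : ℕ → Idx r l → MvPowerSeries (Idx r l) k)
    (h : ℕ → MvPowerSeries (Idx r l) k) : Set (ℝ × ℝ) :=
  posHullSet (cloudLev w eta h)


/-!
Write `ν s` for the explicit value of the level `s` and `λ` for the abscissas of the Newton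
polygon. Through the terms `(-f) ^ (t - s) * eta t` and `(-f) ^ (t - s - 1) * h t * df`, every
monomial of the `z'`-level `s` comes from a monomial of some level `t ≥ s` whose weight is smaller
by at least `(t - s) δ₀`; conversely, a monomial of level `s` whose weight stays below
`w + (t - s) δ₀` for every monomial weight `w` of every level `t > s` has the same coefficient in
both families. The first fact gives `min_s (s δ + ν s) ≤ min_s (s δ + ν' s)` for `δ ≤ δ₀`; the
second, applied to a lowest monomial of the highest minimizing level, gives the reverse inequality.

Above `χ_{δ₀}` a Newton polygon is the envelope of its supporting lines of slopes `δ ∈ (0, δ₀]`,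
so equal values of `ς_δ` for these `δ` force equal abscissas there and equal critical heights.
Finally `λ s + δ₀ s` increases strictly above `χ`, so a monomial of weight `λ s` at a level
`s ≥ χ` satisfies the second criterion.
-/

lemma exists_coe_eq_of_nonneg_of_ne_top {x : EReal} (h0 : 0 ≤ x) (h : x ≠ ⊤) :
    ∃ r : ℝ, x = r := by
  induction x using EReal.rec <;> simp_all

section Weight

variable {σ : Type} {W : σ → ℝ}

lemma wtG_add (e₁ e₂ : σ →₀ ℕ) : wtG W (e₁ + e₂) = wtG W e₁ + wtG W e₂ :=
  Finsupp.sum_add_index' (fun _ => by simp) (fun _ _ _ => by push_cast; ring)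

lemma wtG_single (b : σ) (n : ℕ) : wtG W (Finsupp.single b n) = n * W b :=
  Finsupp.sum_single_index (by simp)

lemma wtG_nonneg (hW : ∀ b, 0 ≤ W b) (e : σ →₀ ℕ) : 0 ≤ wtG W e :=
  Finset.sum_nonneg fun b _ => mul_nonneg (Nat.cast_nonneg _) (hW b)

lemma finite_wtG_le [Finite σ] (hW : ∀ b, 0 ≤ W b) (B : ℝ) :
    {v : ℝ | ∃ e : σ →₀ ℕ, wtG W e = v ∧ v ≤ B}.Finite := by
  have := Fintype.ofFinite σ
  have hS : (Set.univ.pi fun b : σ => Set.Iic ⌈B / W b⌉₊).Finite :=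
    Set.Finite.pi fun _ => Set.finite_Iic _
  refine (hS.image fun n => ∑ b, (n b : ℝ) * W b).subset ?_
  rintro _ ⟨e, rfl, he⟩
  have hwt : wtG W e = ∑ b, (e b : ℝ) * W b := Finsupp.sum_fintype _ _ (by simp)
  -- coordinates of weight zero are irrelevant, the others are bounded by `B / W b`
  refine ⟨fun b => if W b = 0 then 0 else e b, fun b _ => ?_, ?_⟩
  · simp only [Set.mem_Iic]
    split_ifs with hb
    · exact Nat.zero_le _
    · have hle : (e b : ℝ) * W b ≤ wtG W e := hwt ▸
        Finset.single_le_sum (f := fun b => (e b : ℝ) * W b)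
          (fun b _ => mul_nonneg (Nat.cast_nonneg _) (hW b)) (Finset.mem_univ b)
      have hpos : 0 < W b := lt_of_le_of_ne (hW b) (Ne.symm hb)
      exact Nat.cast_le.1 ((le_div_iff₀ hpos |>.2 (hle.trans he)).trans (Nat.le_ceil _))
  · rw [hwt]
    refine Finset.sum_congr rfl fun b _ => ?_
    by_cases hb : W b = 0 <;> simp [hb]

def wtInf (W : σ → ℝ) (S : Set (σ →₀ ℕ)) : EReal := ⨅ e ∈ S, (wtG W e : EReal)

variable {S : Set (σ →₀ ℕ)}

lemma wtInf_le {e : σ →₀ ℕ} (he : e ∈ S) : wtInf W S ≤ wtG W e := biInf_le _ he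

lemma le_wtInf_iff {c : EReal} : c ≤ wtInf W S ↔ ∀ e ∈ S, c ≤ wtG W e := le_iInf₂_iff

lemma wtInf_nonneg (hW : ∀ b, 0 ≤ W b) : 0 ≤ wtInf W S :=
  le_wtInf_iff.2 fun e _ => EReal.coe_nonneg.2 (wtG_nonneg hW e)

lemma le_coe_add_wtInf {c : EReal} {a : ℝ} (h : ∀ e ∈ S, c ≤ ((a + wtG W e : ℝ) : EReal)) :
    c ≤ a + wtInf W S := by
  rw [add_comm, ← EReal.sub_le_iff_le_add (by simp) (by simp), le_wtInf_iff]
  intro e he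
  rw [EReal.sub_le_iff_le_add (by simp) (by simp), ← EReal.coe_add, add_comm]
  exact h e he

lemma exists_wtG_eq_wtInf [Finite σ] (hW : ∀ b, 0 ≤ W b) (hS : S.Nonempty) :
    ∃ e ∈ S, (wtG W e : EReal) = wtInf W S := by
  obtain ⟨e₀, he₀⟩ := hS
  obtain ⟨_, ⟨⟨e, he, rfl⟩, -⟩, hmin⟩ := Set.exists_min_image
    {v | (∃ e ∈ S, wtG W e = v) ∧ v ≤ wtG W e₀} id
    ((finite_wtG_le hW (wtG W e₀)).subset fun v ⟨⟨e, _, he⟩, hv⟩ => ⟨e, he, hv⟩)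
    ⟨_, ⟨e₀, he₀, rfl⟩, le_rfl⟩
  refine ⟨e, he, le_antisymm (le_wtInf_iff.2 fun e' he' => ?_) (wtInf_le he)⟩
  rcases le_total (wtG W e') (wtG W e₀) with h | h
  · exact EReal.coe_le_coe_iff.2 (hmin _ ⟨⟨e', he', rfl⟩, h⟩)
  · exact EReal.coe_le_coe_iff.2 ((hmin _ ⟨⟨e₀, he₀, rfl⟩, le_rfl⟩).trans h)

end Weight

section Argmin

variable {ν : ℕ → EReal}

lemma exists_isGreatest_argmin (hν : ∀ s, 0 ≤ ν s) (hfin : ∃ s, ν s ≠ ⊤) {δ : ℝ} (hδ : 0 < δ) :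
    ∃ s₀, IsGreatest
      {s : ℕ | ((s * δ : ℝ) : EReal) + ν s = ⨅ t : ℕ, ((t * δ : ℝ) : EReal) + ν t} s₀ := by
  set F : ℕ → EReal := fun s => ((s * δ : ℝ) : EReal) + ν s with hF
  obtain ⟨s₁, hs₁⟩ := hfin
  obtain ⟨x, hx⟩ := exists_coe_eq_of_nonneg_of_ne_top (hν s₁) hs₁
  set B : ℝ := s₁ * δ + x
  have hB : F s₁ = B := by simp [hF, hx, B]
  have hsmall : ∀ s, F s ≤ B → s ≤ ⌈B / δ⌉₊ := by
    intro s hs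
    have : (s : ℝ) * δ ≤ B := EReal.coe_le_coe_iff.1 ((le_add_of_nonneg_right (hν s)).trans hs)
    exact Nat.cast_le.1 (((le_div_iff₀ hδ).2 this).trans (Nat.le_ceil _))
  have hs₁mem : s₁ ∈ Finset.range (⌈B / δ⌉₊ + 1) :=
    Finset.mem_range_succ_iff.2 (hsmall s₁ hB.le)
  obtain ⟨s₂, -, hs₂⟩ := (Finset.range (⌈B / δ⌉₊ + 1)).exists_min_image F ⟨s₁, hs₁mem⟩
  have hmin : ∀ t, F s₂ ≤ F t := fun t => by
    by_cases ht : F t ≤ B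
    · exact hs₂ t (Finset.mem_range_succ_iff.2 (hsmall t ht))
    · exact (hs₂ s₁ hs₁mem).trans (hB.le.trans (not_le.1 ht).le)
  have hbdd : BddAbove {s | F s = ⨅ t, F t} :=
    ⟨_, fun s hs => hsmall s (hs.trans_le ((iInf_le F s₁).trans hB.le))⟩
  exact ⟨_, Nat.sSup_mem ⟨s₂, le_antisymm (le_iInf hmin) (iInf_le F s₂)⟩ hbdd,
    fun _ hs => le_csSup hbdd hs⟩

lemma iInf_coe_add_lt_top_iff {δ : ℝ} :
    (⨅ s : ℕ, ((s * δ : ℝ) : EReal) + ν s) < ⊤ ↔ ∃ s, ν s ≠ ⊤ := by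
  refine ⟨fun h => ?_, fun ⟨s, hs⟩ =>
    (iInf_le _ s).trans_lt (EReal.add_lt_top (EReal.coe_ne_top _) hs)⟩
  obtain ⟨s, hs⟩ := iInf_lt_iff.1 h
  refine ⟨s, fun htop => ?_⟩
  rw [htop, EReal.coe_add_top] at hs
  exact lt_irrefl _ hs

end Argmin

section Polygon

lemma add_mem_posHullSet {C : Set (ℝ × ℝ)} {p : ℝ × ℝ} (hp : p ∈ posHullSet C) {a b : ℝ}
    (ha : 0 ≤ a) (hb : 0 ≤ b) : p + (a, b) ∈ posHullSet C := by
  obtain ⟨c, hc, d, hd₁, hd₂, rfl⟩ := hp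
  exact ⟨c, hc, d + (a, b), add_nonneg hd₁ ha, add_nonneg hd₂ hb, add_assoc _ _ _⟩

lemma convex_posHullSet (C : Set (ℝ × ℝ)) : Convex ℝ (posHullSet C) := by
  rintro _ ⟨c, hc, d, hd₁, hd₂, rfl⟩ _ ⟨c', hc', d', hd₁', hd₂', rfl⟩ a b ha hb hab
  refine ⟨a • c + b • c', convex_convexHull ℝ C hc hc' ha hb hab, a • d + b • d', ?_, ?_, ?_⟩
  · simpa using add_nonneg (mul_nonneg ha hd₁) (mul_nonneg hb hd₁')
  · simpa using add_nonneg (mul_nonneg ha hd₂) (mul_nonneg hb hd₂')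
  · simp only [smul_add]; abel

lemma lamN_le_of_mem {N : Set (ℝ × ℝ)} {s : ℕ} {x : ℝ} (hx : (x, (s : ℝ)) ∈ N) :
    lamN N s ≤ x :=
  sInf_le ⟨x, by simpa using hx, rfl⟩

lemma le_lamN_iff {N : Set (ℝ × ℝ)} {s : ℕ} {c : EReal} :
    c ≤ lamN N s ↔ ∀ x : ℝ, (x, (s : ℝ)) ∈ N → c ≤ x := by
  simp only [lamN, Int.cast_natCast, le_sInf_iff]
  exact ⟨fun H x hx => H _ ⟨x, hx, rfl⟩, by rintro H _ ⟨x, hx, rfl⟩; exact H x hx⟩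

lemma exists_lt_of_lamN_lt {N : Set (ℝ × ℝ)} {s : ℕ} {c : EReal} (h : lamN N s < c) :
    ∃ x : ℝ, (x, (s : ℝ)) ∈ N ∧ (x : EReal) < c := by
  obtain ⟨_, ⟨x, hx, rfl⟩, hxc⟩ := sInf_lt_iff.1 h
  exact ⟨x, by simpa using hx, hxc⟩

lemma sigN_le_coe_add_lamN (N : Set (ℝ × ℝ)) (δ : ℝ) (s : ℕ) :
    sigN N δ ≤ ((s * δ : ℝ) : EReal) + lamN N s := by
  rw [add_comm, ← EReal.sub_le_iff_le_add (.inl (EReal.coe_ne_bot _))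
    (.inl (EReal.coe_ne_top _)), le_lamN_iff]
  intro x hx
  rw [EReal.sub_le_iff_le_add (.inl (EReal.coe_ne_bot _)) (.inl (EReal.coe_ne_top _)),
    ← EReal.coe_add]
  exact sInf_le ⟨_, hx, by simp [mul_comm]⟩

lemma lamN_antitone {C : Set (ℝ × ℝ)} {s t : ℕ} (hst : s ≤ t) :
    lamN (posHullSet C) t ≤ lamN (posHullSet C) s := by
  refine le_lamN_iff.2 fun x hx => lamN_le_of_mem ?_
  simpa using add_mem_posHullSet hx le_rfl (sub_nonneg.2 (Nat.cast_le.2 hst))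

lemma lamN_le_chord {C : Set (ℝ × ℝ)} {t s u : ℕ} (hts : t < s) (hsu : s < u) {a b : ℝ}
    (ha : lamN (posHullSet C) t ≤ a) (hb : lamN (posHullSet C) u ≤ b) :
    lamN (posHullSet C) s ≤ (((u - s) * a + (s - t) * b) / (u - t) : ℝ) := by
  have hts' : (t : ℝ) < s := Nat.cast_lt.2 hts
  have hsu' : (s : ℝ) < u := Nat.cast_lt.2 hsu
  set θ : ℝ := (s - t) / (u - t)
  have hθ₀ : 0 ≤ θ := div_nonneg (by linarith) (by linarith)
  have hθ₁ : θ ≤ 1 := (div_le_one (by linarith)).2 (by linarith)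
  have hθ : θ * (u - t) = s - t := div_mul_cancel₀ _ (by linarith)
  have hs : (1 - θ) * t + θ * u = s := by linear_combination hθ
  have hcomb : ((u - s) * a + (s - t) * b) / (u - t) = (1 - θ) * a + θ * b := by
    rw [eq_comm, eq_div_iff (by linarith)]
    linear_combination (b - a) * hθ
  rw [hcomb, ← EReal.le_of_forall_lt_iff_le]
  intro z hz
  have hε : 0 < z - ((1 - θ) * a + θ * b) := sub_pos.2 (EReal.coe_lt_coe_iff.1 hz)
  obtain ⟨x₁, hx₁, hx₁lt⟩ := exists_lt_of_lamN_lt (ha.trans_lt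
    (EReal.coe_lt_coe_iff.2 (lt_add_of_pos_right a hε)))
  obtain ⟨x₂, hx₂, hx₂lt⟩ := exists_lt_of_lamN_lt (hb.trans_lt
    (EReal.coe_lt_coe_iff.2 (lt_add_of_pos_right b hε)))
  have hmem := convex_posHullSet C hx₁ hx₂ (sub_nonneg.2 hθ₁) hθ₀ (by ring)
  simp only [Prod.smul_mk, Prod.mk_add_mk, smul_eq_mul, hs] at hmem
  refine (lamN_le_of_mem hmem).trans (EReal.coe_le_coe_iff.2 ?_)
  nlinarith [EReal.coe_lt_coe_iff.1 hx₁lt, EReal.coe_lt_coe_iff.1 hx₂lt]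

lemma lamN_slope_le {C : Set (ℝ × ℝ)} {t s u : ℕ} (hts : t < s) (hsu : s < u) {a b c : ℝ}
    (ha : lamN (posHullSet C) t = a) (hb : lamN (posHullSet C) s = b)
    (hc : lamN (posHullSet C) u = c) : (b - c) / (u - s) ≤ (a - b) / (s - t) := by
  have hts' : (t : ℝ) < s := Nat.cast_lt.2 hts
  have hsu' : (s : ℝ) < u := Nat.cast_lt.2 hsu
  have h := lamN_le_chord hts hsu ha.le hc.le
  rw [hb, EReal.coe_le_coe_iff, le_div_iff₀ (by linarith)] at h
  rw [div_le_div_iff₀ (by linarith) (by linarith)]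
  nlinarith

def cloudOf (ν : ℕ → EReal) : Set (ℝ × ℝ) := {p | ∃ s : ℕ, p.2 = s ∧ (p.1 : EReal) = ν s}

def polygonOf (ν : ℕ → EReal) : Set (ℝ × ℝ) := posHullSet (cloudOf ν)

variable {ν : ℕ → EReal}

lemma mem_polygonOf {s : ℕ} {x : ℝ} (hx : (x : EReal) = ν s) : (x, (s : ℝ)) ∈ polygonOf ν :=
  ⟨(x, s), subset_convexHull ℝ _ ⟨s, rfl, hx⟩, 0, le_rfl, le_rfl, (add_zero _).symm⟩

lemma le_of_mem_polygonOf {c δ : ℝ} (hδ : 0 ≤ δ)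
    (hc : ∀ s : ℕ, (c : EReal) ≤ ((s * δ : ℝ) : EReal) + ν s) {p : ℝ × ℝ}
    (hp : p ∈ polygonOf ν) : c ≤ p.2 * δ + p.1 := by
  obtain ⟨q, hq, d, hd₁, hd₂, rfl⟩ := hp
  have hlin : IsLinearMap ℝ fun p : ℝ × ℝ => p.2 * δ + p.1 :=
    ⟨fun _ _ => by simp only [Prod.fst_add, Prod.snd_add]; ring,
      fun _ _ => by simp only [Prod.smul_fst, Prod.smul_snd, smul_eq_mul]; ring⟩
  have hq' : c ≤ q.2 * δ + q.1 := by
    refine convexHull_min ?_ (convex_halfSpace_ge hlin c) hq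
    rintro ⟨x, _⟩ ⟨s, rfl, hx⟩
    have := hc s
    rw [← hx, ← EReal.coe_add] at this
    exact EReal.coe_le_coe_iff.1 this
  simp only [Prod.fst_add, Prod.snd_add]
  nlinarith [mul_nonneg hd₂ hδ]

lemma sigN_polygonOf (hν : ∀ s, 0 ≤ ν s) {δ : ℝ} (hδ : 0 ≤ δ) :
    sigN (polygonOf ν) δ = ⨅ s : ℕ, ((s * δ : ℝ) : EReal) + ν s := by
  refine le_antisymm (le_iInf fun s => ?_) (le_sInf ?_)
  · induction hνs : ν s using EReal.rec with
    | bot => exact absurd (hν s) (by simp [hνs])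
    | coe x => exact sInf_le ⟨_, mem_polygonOf hνs.symm, by simp [add_comm, mul_comm]⟩
    | top => exact le_top.trans_eq (EReal.coe_add_top _).symm
  · rintro _ ⟨p, hp, rfl⟩
    refine EReal.ge_of_forall_gt_iff_ge.1 fun z hz => EReal.coe_le_coe_iff.2 ?_
    have := le_of_mem_polygonOf hδ (fun s => hz.le.trans (iInf_le _ s)) hp
    linarith

lemma lamN_polygonOf_le (hν : ∀ s, 0 ≤ ν s) (s : ℕ) : lamN (polygonOf ν) s ≤ ν s := by
  rcases eq_or_ne (ν s) ⊤ with htop | htop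
  · exact htop ▸ le_top
  obtain ⟨x, hx⟩ := exists_coe_eq_of_nonneg_of_ne_top (hν s) htop
  exact hx ▸ lamN_le_of_mem (mem_polygonOf hx.symm)

lemma lamN_polygonOf_nonneg (hν : ∀ s, 0 ≤ ν s) (s : ℕ) : 0 ≤ lamN (polygonOf ν) s :=
  le_lamN_iff.2 fun x hx => EReal.coe_nonneg.2 <| by
    simpa using le_of_mem_polygonOf le_rfl (fun t => by simpa using hν t) hx

lemma exists_sigN_polygonOf_le (hν : ∀ s, 0 ≤ ν s) (hfin : ∃ s, ν s ≠ ⊤) {δ : ℝ} (hδ : 0 ≤ δ) :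
    ∃ B : ℝ, sigN (polygonOf ν) δ ≤ B := by
  obtain ⟨s, hs⟩ := hfin
  obtain ⟨x, hx⟩ := exists_coe_eq_of_nonneg_of_ne_top (hν s) hs
  refine ⟨s * δ + x, ?_⟩
  rw [sigN_polygonOf hν hδ, EReal.coe_add, ← hx]
  exact iInf_le _ s

variable {δ₀ : ℝ}

lemma isGreatest_chiN (hν : ∀ s, 0 ≤ ν s) (hfin : ∃ s, ν s ≠ ⊤) (hδ₀ : 0 < δ₀) :
    IsGreatest {s : ℕ | ((s * δ₀ : ℝ) : EReal) + lamN (polygonOf ν) s = sigN (polygonOf ν) δ₀}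
      (chiN (polygonOf ν) δ₀) := by
  set E := {s : ℕ | ((s * δ₀ : ℝ) : EReal) + lamN (polygonOf ν) s = sigN (polygonOf ν) δ₀}
  have hchi : chiN (polygonOf ν) δ₀ = sSup E := by
    simp only [chiN, E, add_comm (lamN _ _), mul_comm δ₀]
  obtain ⟨s₀, hs₀, -⟩ := exists_isGreatest_argmin hν hfin hδ₀
  have hne : E.Nonempty := ⟨s₀, le_antisymm
    ((add_le_add le_rfl (lamN_polygonOf_le hν s₀)).trans
      (hs₀.trans (sigN_polygonOf hν hδ₀.le).symm).le)
    (sigN_le_coe_add_lamN _ _ _)⟩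
  obtain ⟨B, hB⟩ := exists_sigN_polygonOf_le hν hfin hδ₀.le
  have hbdd : BddAbove E := by
    refine ⟨⌈B / δ₀⌉₊, fun s hs => Nat.cast_le.1 (le_trans ?_ (Nat.le_ceil _))⟩
    refine (le_div_iff₀ hδ₀).2 (EReal.coe_le_coe_iff.1 ?_)
    exact (le_add_of_nonneg_right (lamN_polygonOf_nonneg hν s)).trans ((le_of_eq hs).trans hB)
  rw [hchi]
  exact ⟨Nat.sSup_mem hne hbdd, fun _ hs => le_csSup hbdd hs⟩

lemma sigN_lt_of_chiN_lt (hν : ∀ s, 0 ≤ ν s) (hfin : ∃ s, ν s ≠ ⊤) (hδ₀ : 0 < δ₀) {t : ℕ}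
    (ht : chiN (polygonOf ν) δ₀ < t) :
    sigN (polygonOf ν) δ₀ < ((t * δ₀ : ℝ) : EReal) + lamN (polygonOf ν) t :=
  (sigN_le_coe_add_lamN _ _ _).lt_of_ne fun h =>
    ht.not_ge ((isGreatest_chiN hν hfin hδ₀).2 h.symm)

lemma exists_lamN_eq_coe_of_chiN_le (hν : ∀ s, 0 ≤ ν s) (hfin : ∃ s, ν s ≠ ⊤) (hδ₀ : 0 < δ₀) {s : ℕ}
    (hs : chiN (polygonOf ν) δ₀ ≤ s) : ∃ L : ℝ, lamN (polygonOf ν) s = L := by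
  have hχ : lamN (polygonOf ν) (chiN (polygonOf ν) δ₀) ≠ ⊤ := by
    obtain ⟨B, hB⟩ := exists_sigN_polygonOf_le hν hfin hδ₀.le
    intro htop
    have h := (isGreatest_chiN hν hfin hδ₀).1
    rw [Set.mem_ofPred_eq, htop, EReal.coe_add_top] at h
    exact EReal.coe_lt_top B |>.not_ge (h ▸ hB)
  exact exists_coe_eq_of_nonneg_of_ne_top (lamN_polygonOf_nonneg hν s)
    (ne_top_of_le_ne_top hχ (lamN_antitone hs))

lemma coe_add_lamN_lt_of_chiN_le (hν : ∀ s, 0 ≤ ν s) (hfin : ∃ s, ν s ≠ ⊤) (hδ₀ : 0 < δ₀) {s t : ℕ}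
    (hs : chiN (polygonOf ν) δ₀ ≤ s) (hst : s < t) :
    ((s * δ₀ : ℝ) : EReal) + lamN (polygonOf ν) s <
      ((t * δ₀ : ℝ) : EReal) + lamN (polygonOf ν) t := by
  have hgr := isGreatest_chiN hν hfin hδ₀
  rcases eq_or_lt_of_le hs with h | hχs
  · rw [← h, hgr.1]
    exact sigN_lt_of_chiN_lt hν hfin hδ₀ (h ▸ hst)
  obtain ⟨L, hL⟩ := exists_lamN_eq_coe_of_chiN_le hν hfin hδ₀ hs
  obtain ⟨a, ha⟩ := exists_lamN_eq_coe_of_chiN_le hν hfin hδ₀ le_rfl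
  rcases eq_or_ne (lamN (polygonOf ν) t) ⊤ with htop | htop
  · rw [htop, hL, EReal.coe_add_top, ← EReal.coe_add]
    exact EReal.coe_lt_top _
  obtain ⟨b, hb⟩ := exists_coe_eq_of_nonneg_of_ne_top (lamN_polygonOf_nonneg hν t) htop
  have hχ : (chiN (polygonOf ν) δ₀ * δ₀ : ℝ) + a < s * δ₀ + L := by
    have := sigN_lt_of_chiN_lt hν hfin hδ₀ hχs
    rw [← hgr.1, ha, hL] at this
    exact_mod_cast this
  have hχs' : ((chiN (polygonOf ν) δ₀ : ℕ) : ℝ) < s := Nat.cast_lt.2 hχs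
  have hst' : (s : ℝ) < t := Nat.cast_lt.2 hst
  -- the slope of `λ` on `[s, t]` is at most its slope on `[χ, s]`, which is less than `δ₀`
  have hslope := (lamN_slope_le hχs hst ha hL hb).trans_lt
    (show (a - L) / (s - chiN (polygonOf ν) δ₀) < δ₀ from
      (div_lt_iff₀ (sub_pos.2 hχs')).2 (by linarith))
  rw [div_lt_iff₀ (sub_pos.2 hst')] at hslope
  rw [hL, hb]
  exact_mod_cast (by linarith : (s : ℝ) * δ₀ + L < t * δ₀ + b)

lemma exists_supporting_slope (hν : ∀ s, 0 ≤ ν s) (hfin : ∃ s, ν s ≠ ⊤) (hδ₀ : 0 < δ₀) {s : ℕ}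
    (hs : chiN (polygonOf ν) δ₀ ≤ s) :
    ∃ δ, 0 ≤ δ ∧ δ ≤ δ₀ ∧ ∀ t : ℕ,
      ((s * δ : ℝ) : EReal) + lamN (polygonOf ν) s ≤
        ((t * δ : ℝ) : EReal) + lamN (polygonOf ν) t := by
  set L : ℕ → ℝ := fun u => (lamN (polygonOf ν) u).toReal
  have hL : ∀ u, s ≤ u → lamN (polygonOf ν) u = L u := fun u hu => by
    obtain ⟨x, hx⟩ := exists_lamN_eq_coe_of_chiN_le hν hfin hδ₀ (hs.trans hu)
    simp [L, hx]
  -- `δ` is the steepest slope of `λ` to the right of `s`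
  set A : Set ℝ := (fun u : ℕ => (L s - L u) / (u - s)) '' Set.Ioi s
  have hA : ∀ u, s < u → (L s - L u) / (u - s) ≤ δ₀ := fun u hu => by
    have h := coe_add_lamN_lt_of_chiN_le hν hfin hδ₀ hs hu
    rw [hL s le_rfl, hL u hu.le] at h
    have h' : (s : ℝ) * δ₀ + L s < u * δ₀ + L u := by exact_mod_cast h
    rw [div_le_iff₀ (sub_pos.2 (Nat.cast_lt.2 hu))]
    linarith
  have hbdd : BddAbove A := ⟨δ₀, by rintro _ ⟨u, hu, rfl⟩; exact hA u hu⟩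
  have hne : A.Nonempty := ⟨_, s + 1, Nat.lt_succ_self s, rfl⟩
  refine ⟨sSup A, ?_, csSup_le hne (by rintro _ ⟨u, hu, rfl⟩; exact hA u hu), fun t => ?_⟩
  · refine le_trans ?_ (le_csSup hbdd ⟨s + 1, Nat.lt_succ_self s, rfl⟩)
    have h : lamN (polygonOf ν) ((s + 1 : ℕ) : ℤ) ≤ lamN (polygonOf ν) s :=
      lamN_antitone (Nat.le_succ s)
    rw [hL s le_rfl, hL _ (Nat.le_succ s)] at h
    exact div_nonneg (sub_nonneg.2 (EReal.coe_le_coe_iff.1 h)) (by simp)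
  rcases lt_trichotomy t s with hts | rfl | hst
  · rcases eq_or_ne (lamN (polygonOf ν) t) ⊤ with htop | htop
    · rw [htop, EReal.coe_add_top]
      exact le_top
    obtain ⟨a, ha⟩ := exists_coe_eq_of_nonneg_of_ne_top (lamN_polygonOf_nonneg hν t) htop
    have h : sSup A ≤ (a - L s) / (s - t) := csSup_le hne <| by
      rintro _ ⟨u, hu, rfl⟩
      exact lamN_slope_le hts hu ha (hL s le_rfl) (hL u (le_of_lt hu))
    rw [le_div_iff₀ (sub_pos.2 (Nat.cast_lt.2 hts))] at h
    rw [ha, hL s le_rfl]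
    exact_mod_cast (by linarith : (s : ℝ) * sSup A + L s ≤ t * sSup A + a)
  · exact le_rfl
  · have h := le_csSup hbdd ⟨t, hst, rfl⟩
    rw [div_le_iff₀ (sub_pos.2 (Nat.cast_lt.2 hst))] at h
    rw [hL s le_rfl, hL t hst.le]
    exact_mod_cast (by linarith : (s : ℝ) * sSup A + L s ≤ t * sSup A + L t)

lemma exists_coe_le_sigN_sub (hν : ∀ s, 0 ≤ ν s) (hfin : ∃ s, ν s ≠ ⊤) (hδ₀ : 0 < δ₀)
    {s : ℕ} (hs : chiN (polygonOf ν) δ₀ ≤ s) {z : ℝ} (hz : (z : EReal) < lamN (polygonOf ν) s) :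
    ∃ δ ∈ Set.Ioc 0 δ₀, (z : EReal) ≤ sigN (polygonOf ν) δ - ((s * δ : ℝ) : EReal) := by
  obtain ⟨L, hL⟩ := exists_lamN_eq_coe_of_chiN_le hν hfin hδ₀ hs
  obtain ⟨δ', hδ'₀, hδ'δ₀, hδ'⟩ := exists_supporting_slope hν hfin hδ₀ hs
  have hzL : 0 < L - z := sub_pos.2 (EReal.coe_lt_coe_iff.1 (hL ▸ hz))
  -- tilt the supporting line of slope `δ'` slightly, so that its slope becomes positive
  set δ := min δ₀ (δ' + (L - z) / (s + 1))
  have hδ'δ : δ' ≤ δ := le_min hδ'δ₀ (le_add_of_nonneg_right (by positivity))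
  have hsδ : s * δ ≤ s * δ' + (L - z) := by
    have h₁ : (s : ℝ) * δ ≤ s * (δ' + (L - z) / (s + 1)) :=
      mul_le_mul_of_nonneg_left (min_le_right _ _) (Nat.cast_nonneg _)
    have h₂ : (s : ℝ) * ((L - z) / (s + 1)) ≤ L - z := by
      rw [mul_div_assoc', div_le_iff₀ (by positivity)]
      nlinarith
    linarith
  refine ⟨δ, ⟨lt_min hδ₀ (by positivity), min_le_left _ _⟩, ?_⟩
  rw [EReal.le_sub_iff_add_le (.inl (EReal.coe_ne_bot _)) (.inl (EReal.coe_ne_top _)),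
    sigN_polygonOf hν (by positivity), ← EReal.coe_add]
  refine le_iInf fun t => ?_
  have h := (hδ' t).trans (add_le_add le_rfl (lamN_polygonOf_le hν t))
  rcases eq_or_ne (ν t) ⊤ with htop | htop
  · rw [htop, EReal.coe_add_top]
    exact le_top
  obtain ⟨x, hx⟩ := exists_coe_eq_of_nonneg_of_ne_top (hν t) htop
  rw [hx, hL] at h
  have h' : (s : ℝ) * δ' + L ≤ t * δ' + x := by exact_mod_cast h
  have htδ : (t : ℝ) * δ' ≤ t * δ := mul_le_mul_of_nonneg_left hδ'δ (Nat.cast_nonneg t)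
  rw [hx]
  exact_mod_cast (by linarith : z + s * δ ≤ t * δ + x)

lemma lamN_eq_iSup_sigN (hν : ∀ s, 0 ≤ ν s) (hfin : ∃ s, ν s ≠ ⊤) (hδ₀ : 0 < δ₀) {s : ℕ}
    (hs : chiN (polygonOf ν) δ₀ ≤ s) :
    lamN (polygonOf ν) s = ⨆ δ ∈ Set.Ioc 0 δ₀, sigN (polygonOf ν) δ - ((s * δ : ℝ) : EReal) := by
  refine le_antisymm (EReal.ge_of_forall_gt_iff_ge.1 fun z hz => ?_) (iSup₂_le fun δ _ => ?_)
  · obtain ⟨δ, hδ, hzδ⟩ := exists_coe_le_sigN_sub hν hfin hδ₀ hs hz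
    exact le_iSup₂_of_le δ hδ hzδ
  · rw [EReal.sub_le_iff_le_add (.inl (EReal.coe_ne_bot _)) (.inl (EReal.coe_ne_top _)),
      add_comm]
    exact sigN_le_coe_add_lamN _ _ _

end Polygon

section Invariance

variable {ν ν' : ℕ → EReal} {δ₀ : ℝ}

lemma lamN_eq_of_sigN_eq (hν : ∀ s, 0 ≤ ν s) (hfin : ∃ s, ν s ≠ ⊤) (hν' : ∀ s, 0 ≤ ν' s)
    (hfin' : ∃ s, ν' s ≠ ⊤) (hδ₀ : 0 < δ₀)
    (hσ : ∀ δ ∈ Set.Ioc 0 δ₀, sigN (polygonOf ν) δ = sigN (polygonOf ν') δ) {s : ℕ}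
    (hs : chiN (polygonOf ν) δ₀ ≤ s) (hs' : chiN (polygonOf ν') δ₀ ≤ s) :
    lamN (polygonOf ν) s = lamN (polygonOf ν') s := by
  rw [lamN_eq_iSup_sigN hν hfin hδ₀ hs, lamN_eq_iSup_sigN hν' hfin' hδ₀ hs']
  exact iSup_congr fun δ => iSup_congr fun hδ => by rw [hσ δ hδ]

lemma chiN_le_of_sigN_eq (hν : ∀ s, 0 ≤ ν s) (hfin : ∃ s, ν s ≠ ⊤) (hν' : ∀ s, 0 ≤ ν' s)
    (hfin' : ∃ s, ν' s ≠ ⊤) (hδ₀ : 0 < δ₀)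
    (hσ : ∀ δ ∈ Set.Ioc 0 δ₀, sigN (polygonOf ν) δ = sigN (polygonOf ν') δ) :
    chiN (polygonOf ν') δ₀ ≤ chiN (polygonOf ν) δ₀ := by
  by_contra! h
  have h' := (isGreatest_chiN hν' hfin' hδ₀).1
  rw [Set.mem_ofPred_eq, ← lamN_eq_of_sigN_eq hν hfin hν' hfin' hδ₀ hσ h.le le_rfl,
    ← hσ δ₀ ⟨hδ₀, le_rfl⟩] at h'
  exact h.not_ge ((isGreatest_chiN hν hfin hδ₀).2 h')

theorem chiN_eq_and_lamN_eq_of_sigN_eq (hν : ∀ s, 0 ≤ ν s) (hfin : ∃ s, ν s ≠ ⊤)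
    (hν' : ∀ s, 0 ≤ ν' s) (hfin' : ∃ s, ν' s ≠ ⊤) (hδ₀ : 0 < δ₀)
    (hσ : ∀ δ ∈ Set.Ioc 0 δ₀, sigN (polygonOf ν) δ = sigN (polygonOf ν') δ) :
    chiN (polygonOf ν) δ₀ = chiN (polygonOf ν') δ₀ ∧
      ∀ s : ℕ, chiN (polygonOf ν) δ₀ ≤ s → lamN (polygonOf ν) s = lamN (polygonOf ν') s := by
  have hχ := le_antisymm (chiN_le_of_sigN_eq hν' hfin' hν hfin hδ₀ fun δ hδ => (hσ δ hδ).symm)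
    (chiN_le_of_sigN_eq hν hfin hν' hfin' hδ₀ hσ)
  exact ⟨hχ, fun s hs => lamN_eq_of_sigN_eq hν hfin hν' hfin' hδ₀ hσ hs (hχ ▸ hs)⟩

end Invariance

section Valuation

variable {k : Type} [Field k] {σ : Type} {W : σ → ℝ}

lemma nuG_eq_wtInf (f : MvPowerSeries σ k) : nuG W f = wtInf W {e | coeff e f ≠ 0} := by
  rw [nuG, wtInf, ← sInf_image]
  congr 1
  ext v
  simp [eq_comm]

lemma le_nuG_iff {f : MvPowerSeries σ k} {c : EReal} :
    c ≤ nuG W f ↔ ∀ e, coeff e f ≠ 0 → c ≤ wtG W e := by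
  rw [nuG_eq_wtInf, le_wtInf_iff]
  rfl

lemma nuG_neg (f : MvPowerSeries σ k) : nuG W (-f) = nuG W f := by
  simp [nuG]

lemma le_nuG_mul {f g : MvPowerSeries σ k} {a b : ℝ} (hf : (a : EReal) ≤ nuG W f)
    (hg : (b : EReal) ≤ nuG W g) : ((a + b : ℝ) : EReal) ≤ nuG W (f * g) := by
  rw [le_nuG_iff] at *
  intro e he
  rw [coeff_mul] at he
  obtain ⟨p, hp, hne⟩ := Finset.exists_ne_zero_of_sum_ne_zero he
  rw [← Finset.HasAntidiagonal.mem_antidiagonal.1 hp, wtG_add, EReal.coe_add, EReal.coe_add]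
  exact add_le_add (hf _ (left_ne_zero_of_mul hne)) (hg _ (right_ne_zero_of_mul hne))

lemma le_nuG_pow {f : MvPowerSeries σ k} {a : ℝ} (hf : (a : EReal) ≤ nuG W f) (n : ℕ) :
    ((n * a : ℝ) : EReal) ≤ nuG W (f ^ n) := by
  induction n with
  | zero =>
    refine le_nuG_iff.2 fun e he => ?_
    rw [pow_zero, coeff_one] at he
    have he0 : e = 0 := by by_contra h0; simp [h0] at he
    simp [he0, wtG]
  | succ n ih => simpa [pow_succ, add_mul] using le_nuG_mul ih hf

lemma le_nuG_DopG {isLog : σ → Bool} (hW : ∀ b, isLog b = false → W b = 0)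
    {f : MvPowerSeries σ k} {a : ℝ} (hf : (a : EReal) ≤ nuG W f) (b : σ) :
    (a : EReal) ≤ nuG W (DopG isLog b f) := by
  rw [le_nuG_iff] at *
  intro e he
  have hco : coeff e (DopG isLog b f) = if isLog b then (e b : k) * coeff e f
      else ((e b : k) + 1) * coeff (e + Finsupp.single b 1) f := rfl
  rw [hco] at he
  cases hb : isLog b <;> simp only [hb, if_true, if_false, Bool.false_eq_true] at he
  · simpa [wtG_add, wtG_single, hW b hb] using hf _ (right_ne_zero_of_mul he)
  · exact hf e (right_ne_zero_of_mul he)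

lemma coeff_mul_eq_zero_of_wtG_lt {F g : MvPowerSeries σ k} {a : ℝ} (hF : (a : EReal) ≤ nuG W F)
    {e : σ →₀ ℕ} (h : ∀ e₂, coeff e₂ g ≠ 0 → wtG W e < a + wtG W e₂) : coeff e (F * g) = 0 := by
  rw [coeff_mul]
  refine Finset.sum_eq_zero fun p hp => ?_
  by_contra hne
  have h₁ := EReal.coe_le_coe_iff.1 (le_nuG_iff.1 hF _ (left_ne_zero_of_mul hne))
  have h₂ := h _ (right_ne_zero_of_mul hne)
  rw [← Finset.HasAntidiagonal.mem_antidiagonal.1 hp, wtG_add] at h₂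
  linarith

end Valuation

section Levels

variable {k : Type} [Field k] {σ : Type} {W : σ → ℝ} {isLog : σ → Bool}
  {eta eta' : ℕ → σ → MvPowerSeries σ k} {h h' : ℕ → MvPowerSeries σ k}
  {f : MvPowerSeries σ k} {δ₀ : ℝ}

def levelSupport (eta : ℕ → σ → MvPowerSeries σ k) (h : ℕ → MvPowerSeries σ k) (s : ℕ) :
    Set (σ →₀ ℕ) :=
  {e | (∃ b, coeff e (eta s b) ≠ 0) ∨ coeff e (h s) ≠ 0}

lemma min_nu1G_nuG_eq_wtInf (s : ℕ) :
    min (nu1G W (eta s)) (nuG W (h s)) = wtInf W (levelSupport eta h s) := by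
  have : levelSupport eta h s =
      (⋃ b, {e | coeff e (eta s b) ≠ 0}) ∪ {e | coeff e (h s) ≠ 0} := by
    ext
    simp [levelSupport]
  rw [this, wtInf, iInf_union, iInf_iUnion, nu1G]
  simp only [nuG_eq_wtInf, wtInf]

/-- `(eta', h')` are the levels of `ω = Σ z ^ s (eta s + h s dz/z)` in the coordinate
`z' = z + f`, given coefficientwise. -/
structure IsLevelShift (isLog : σ → Bool) (f : MvPowerSeries σ k)
    (eta eta' : ℕ → σ → MvPowerSeries σ k) (h h' : ℕ → MvPowerSeries σ k) : Prop where
  h_zero : h 0 = 0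
  coeff_eta' : ∀ (s : ℕ) (b : σ) (e : σ →₀ ℕ),
    coeff e (eta' s b) =
      (finsum fun t : ℕ => if s ≤ t then
          (Nat.choose t s : k) * coeff e ((-f) ^ (t - s) * eta t b)
        else 0)
      - (finsum fun t : ℕ => if s + 1 ≤ t then
          (Nat.choose (t - 1) s : k) * coeff e ((-f) ^ (t - s - 1) * (h t * DopG isLog b f))
        else 0)
  coeff_h' : ∀ (s : ℕ) (e : σ →₀ ℕ),
    coeff e (h' s) =
      finsum fun t : ℕ => if 1 ≤ s ∧ s ≤ t then
          (Nat.choose (t - 1) (s - 1) : k) * coeff e ((-f) ^ (t - s) * h t)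
        else 0

lemma le_nuG_neg_pow (hf : (δ₀ : EReal) ≤ nuG W f) (n : ℕ) :
    ((n * δ₀ : ℝ) : EReal) ≤ nuG W ((-f) ^ n) :=
  le_nuG_pow (by rwa [nuG_neg]) n

lemma coeff_eta'_eq (hW : ∀ b, isLog b = false → W b = 0) (hf : (δ₀ : EReal) ≤ nuG W f)
    (hS : IsLevelShift isLog f eta eta' h h') {s : ℕ} {e : σ →₀ ℕ}
    (H : ∀ t, s < t → ∀ e₂ ∈ levelSupport eta h t, wtG W e < (t - s : ℝ) * δ₀ + wtG W e₂)
    (b : σ) : coeff e (eta' s b) = coeff e (eta s b) := by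
  rw [hS.coeff_eta', finsum_eq_single _ s, if_pos le_rfl, Nat.choose_self, Nat.sub_self,
    pow_zero, one_mul, Nat.cast_one, one_mul, sub_eq_self]
  · refine finsum_eq_zero_of_forall_eq_zero fun t => ?_
    split_ifs with hst
    · obtain ⟨n, rfl⟩ := Nat.exists_eq_add_of_le hst
      have hF := le_nuG_mul (le_nuG_neg_pow hf n) (le_nuG_DopG hW hf b)
      rw [show s + 1 + n - s - 1 = n by omega, mul_left_comm, mul_comm (h _),
        coeff_mul_eq_zero_of_wtG_lt hF fun e₂ he₂ => ?_, mul_zero]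
      have := H _ (by omega) e₂ (.inr he₂)
      push_cast at this ⊢
      linarith
    · rfl
  · intro t hts
    split_ifs with hst
    · rw [coeff_mul_eq_zero_of_wtG_lt (le_nuG_neg_pow hf _) fun e₂ he₂ => ?_, mul_zero]
      rw [Nat.cast_sub hst]
      exact H t (lt_of_le_of_ne hst (Ne.symm hts)) e₂ (.inl ⟨b, he₂⟩)
    · rfl

lemma coeff_h'_eq (hf : (δ₀ : EReal) ≤ nuG W f) (hS : IsLevelShift isLog f eta eta' h h')
    {s : ℕ} {e : σ →₀ ℕ}
    (H : ∀ t, s < t → ∀ e₂ ∈ levelSupport eta h t, wtG W e < (t - s : ℝ) * δ₀ + wtG W e₂) :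
    coeff e (h' s) = coeff e (h s) := by
  rw [hS.coeff_h']
  rcases Nat.eq_zero_or_pos s with rfl | hs
  · simp [hS.h_zero]
  rw [finsum_eq_single _ s, if_pos ⟨hs, le_rfl⟩, Nat.sub_self, pow_zero, one_mul,
    Nat.choose_self, Nat.cast_one, one_mul]
  intro t hts
  split_ifs with hst
  · rw [coeff_mul_eq_zero_of_wtG_lt (le_nuG_neg_pow hf _) fun e₂ he₂ => ?_, mul_zero]
    rw [Nat.cast_sub hst.2]
    exact H t (lt_of_le_of_ne hst.2 (Ne.symm hts)) e₂ (.inr he₂)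
  · rfl

lemma mem_levelSupport_shift_iff (hW : ∀ b, isLog b = false → W b = 0)
    (hf : (δ₀ : EReal) ≤ nuG W f) (hS : IsLevelShift isLog f eta eta' h h') {s : ℕ}
    {e : σ →₀ ℕ}
    (H : ∀ t, s < t → ∀ e₂ ∈ levelSupport eta h t, wtG W e < (t - s : ℝ) * δ₀ + wtG W e₂) :
    e ∈ levelSupport eta' h' s ↔ e ∈ levelSupport eta h s := by
  simp only [levelSupport, Set.mem_ofPred_eq, coeff_eta'_eq hW hf hS H, coeff_h'_eq hf hS H]

lemma exists_le_of_mem_levelSupport_shift (hW : ∀ b, isLog b = false → W b = 0)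
    (hf : (δ₀ : EReal) ≤ nuG W f) (hS : IsLevelShift isLog f eta eta' h h') {s : ℕ}
    {e : σ →₀ ℕ} (he : e ∈ levelSupport eta' h' s) :
    ∃ t, s ≤ t ∧ ∃ e₂ ∈ levelSupport eta h t, (t - s : ℝ) * δ₀ + wtG W e₂ ≤ wtG W e := by
  by_contra! H
  have he' := (mem_levelSupport_shift_iff hW hf hS fun t hst => H t hst.le).1 he
  simpa using H s le_rfl e he'

lemma exists_wtInf_levelSupport_ne_top (hω : ∃ s, (∃ b, eta s b ≠ 0) ∨ h s ≠ 0) :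
    ∃ s, wtInf W (levelSupport eta h s) ≠ ⊤ := by
  obtain ⟨s, hs⟩ := hω
  obtain ⟨e, he⟩ : (levelSupport eta h s).Nonempty := by
    rcases hs with ⟨b, hb⟩ | hb <;> obtain ⟨e, he⟩ := (ne_zero_iff_exists_coeff_ne_zero _).1 hb
    exacts [⟨e, .inl ⟨b, he⟩⟩, ⟨e, .inr he⟩]
  exact ⟨s, ne_top_of_le_ne_top (EReal.coe_ne_top _) (wtInf_le he)⟩

end Levels

section Shift

variable {k : Type} [Field k] {σ : Type} {W : σ → ℝ} {isLog : σ → Bool}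
  {eta eta' : ℕ → σ → MvPowerSeries σ k} {h h' : ℕ → MvPowerSeries σ k}
  {f : MvPowerSeries σ k} {δ₀ δ : ℝ}

lemma iInf_le_iInf_shift (hW : ∀ b, isLog b = false → W b = 0) (hf : (δ₀ : EReal) ≤ nuG W f)
    (hS : IsLevelShift isLog f eta eta' h h') (hδ : δ ≤ δ₀) :
    ⨅ s : ℕ, ((s * δ : ℝ) : EReal) + wtInf W (levelSupport eta h s) ≤
      ⨅ s : ℕ, ((s * δ : ℝ) : EReal) + wtInf W (levelSupport eta' h' s) := by
  refine le_iInf fun s => le_coe_add_wtInf fun e he => ?_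
  obtain ⟨t, hst, e₂, he₂, hle⟩ := exists_le_of_mem_levelSupport_shift hW hf hS he
  have : (t - s : ℝ) * δ ≤ (t - s) * δ₀ :=
    mul_le_mul_of_nonneg_left hδ (sub_nonneg.2 (Nat.cast_le.2 hst))
  calc _ ≤ ((t * δ : ℝ) : EReal) + wtInf W (levelSupport eta h t) := iInf_le _ t
    _ ≤ ((t * δ : ℝ) : EReal) + wtG W e₂ := add_le_add le_rfl (wtInf_le he₂)
    _ ≤ _ := by
      rw [← EReal.coe_add, EReal.coe_le_coe_iff]
      linarith

lemma iInf_shift_le [Finite σ] (hW₀ : ∀ b, 0 ≤ W b) (hW : ∀ b, isLog b = false → W b = 0)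
    (hf : (δ₀ : EReal) ≤ nuG W f) (hS : IsLevelShift isLog f eta eta' h h') (hδ : 0 < δ)
    (hδδ₀ : δ ≤ δ₀) (hfin : ∃ s, wtInf W (levelSupport eta h s) ≠ ⊤) :
    ⨅ s : ℕ, ((s * δ : ℝ) : EReal) + wtInf W (levelSupport eta' h' s) ≤
      ⨅ s : ℕ, ((s * δ : ℝ) : EReal) + wtInf W (levelSupport eta h s) := by
  set ν := fun s => wtInf W (levelSupport eta h s)
  obtain ⟨s₀, hs₀, hmax⟩ := exists_isGreatest_argmin (ν := ν) (fun _ => wtInf_nonneg hW₀) hfin hδ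
  have hfin₀ : ν s₀ ≠ ⊤ := fun htop => by
    have h := hs₀ ▸ iInf_coe_add_lt_top_iff.2 hfin
    rw [htop, EReal.coe_add_top] at h
    exact lt_irrefl _ h
  obtain ⟨e₀, he₀, hwt⟩ := exists_wtG_eq_wtInf (S := levelSupport eta h s₀) hW₀
    (Set.nonempty_iff_ne_empty.2 fun hempty => hfin₀ (by simp [ν, hempty, wtInf]))
  change (wtG W e₀ : EReal) = ν s₀ at hwt
  -- the lowest monomial of the last minimizing level survives the change of coordinates
  have H : ∀ t, s₀ < t → ∀ e₂ ∈ levelSupport eta h t,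
      wtG W e₀ < (t - s₀ : ℝ) * δ₀ + wtG W e₂ := by
    intro t hst e₂ he₂
    have hlt : ((s₀ * δ : ℝ) : EReal) + ν s₀ < ((t * δ : ℝ) : EReal) + wtG W e₂ :=
      hs₀ ▸ ((iInf_le (fun u : ℕ => ((u * δ : ℝ) : EReal) + ν u) t).lt_of_ne
        fun h => hst.not_ge (hmax h.symm)).trans_le
        (add_le_add le_rfl (wtInf_le he₂))
    rw [← hwt, ← EReal.coe_add, ← EReal.coe_add, EReal.coe_lt_coe_iff] at hlt
    have : (t - s₀ : ℝ) * δ ≤ (t - s₀) * δ₀ :=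
      mul_le_mul_of_nonneg_left hδδ₀ (sub_nonneg.2 (Nat.cast_le.2 hst.le))
    linarith
  calc _ ≤ ((s₀ * δ : ℝ) : EReal) + wtInf W (levelSupport eta' h' s₀) := iInf_le _ s₀
    _ ≤ ((s₀ * δ : ℝ) : EReal) + wtG W e₀ :=
      add_le_add le_rfl (wtInf_le ((mem_levelSupport_shift_iff hW hf hS H).2 he₀))
    _ = _ := hwt ▸ hs₀

lemma coeff_shift_eq_of_wtG_eq_lamN (hW₀ : ∀ b, 0 ≤ W b) (hW : ∀ b, isLog b = false → W b = 0)
    (hf : (δ₀ : EReal) ≤ nuG W f) (hS : IsLevelShift isLog f eta eta' h h') (hδ₀ : 0 < δ₀)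
    (hfin : ∃ s, wtInf W (levelSupport eta h s) ≠ ⊤) {s : ℕ}
    (hs : chiN (polygonOf fun s => wtInf W (levelSupport eta h s)) δ₀ ≤ s) {e : σ →₀ ℕ}
    (he : (wtG W e : EReal) = lamN (polygonOf fun s => wtInf W (levelSupport eta h s)) s) :
    (∀ b, coeff e (eta' s b) = coeff e (eta s b)) ∧ coeff e (h' s) = coeff e (h s) := by
  have hν : ∀ s, 0 ≤ wtInf W (levelSupport eta h s) := fun _ => wtInf_nonneg hW₀
  have H : ∀ t, s < t → ∀ e₂ ∈ levelSupport eta h t,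
      wtG W e < (t - s : ℝ) * δ₀ + wtG W e₂ := by
    intro t hst e₂ he₂
    have h₁ := (coe_add_lamN_lt_of_chiN_le hν hfin hδ₀ hs hst).trans_le
      (add_le_add le_rfl ((lamN_polygonOf_le hν t).trans (wtInf_le he₂)))
    rw [← he, ← EReal.coe_add, ← EReal.coe_add, EReal.coe_lt_coe_iff] at h₁
    linarith
  exact ⟨coeff_eta'_eq hW hf hS H, coeff_h'_eq hf hS H⟩

end Shift

lemma NPLev_eq_polygonOf {k : Type} [Field k] {r l : ℕ} (w : Fin r → ℝ)
    (eta : ℕ → Idx r l → MvPowerSeries (Idx r l) k) (h : ℕ → MvPowerSeries (Idx r l) k) :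
    NPLev w eta h = polygonOf fun s => wtInf (Sum.elim w fun _ => 0) (levelSupport eta h s) := by
  simp only [NPLev, cloudLev, polygonOf, cloudOf, min_nu1G_nuG_eq_wtInf]

theorem statement13_general {k : Type} [Field k] {r l : ℕ}
    (w : Fin r → ℝ) (hw : ∀ i, 0 < w i)
    (eta eta' : ℕ → Idx r l → MvPowerSeries (Idx r l) k)
    (h h' : ℕ → MvPowerSeries (Idx r l) k) (hh0 : h 0 = 0)
    (hω : ∃ s, (∃ b, eta s b ≠ 0) ∨ h s ≠ 0)
    (f : MvPowerSeries (Idx r l) k) (δ₀ : ℝ) (hδ₀ : 0 < δ₀)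
    (hf : (δ₀ : EReal) ≤ nuG (Sum.elim w fun _ => (0:ℝ)) f)
    (heta' : ∀ (s : ℕ) (b : Idx r l) (e : Idx r l →₀ ℕ),
      MvPowerSeries.coeff e (eta' s b) =
        (finsum fun t : ℕ => if s ≤ t then
            (Nat.choose t s : k) * MvPowerSeries.coeff e ((-f) ^ (t - s) * eta t b)
          else 0)
        - (finsum fun t : ℕ => if s + 1 ≤ t then
            (Nat.choose (t - 1) s : k) *
              MvPowerSeries.coeff e
                ((-f) ^ (t - s - 1) * (h t * DopG (fun u => u.isLeft) b f))
          else 0))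
    (hh' : ∀ (s : ℕ) (e : Idx r l →₀ ℕ),
      MvPowerSeries.coeff e (h' s) =
        finsum fun t : ℕ => if 1 ≤ s ∧ s ≤ t then
            (Nat.choose (t - 1) (s - 1) : k) *
              MvPowerSeries.coeff e ((-f) ^ (t - s) * h t)
          else 0) :
    (∀ δ : ℝ, 0 < δ → δ ≤ δ₀ →
      (⨅ s : ℕ, (((s * δ : ℝ)) : EReal) +
          min (nu1G (Sum.elim w fun _ => (0:ℝ)) (eta s))
            (nuG (Sum.elim w fun _ => (0:ℝ)) (h s))) =
      (⨅ s : ℕ, (((s * δ : ℝ)) : EReal) +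
          min (nu1G (Sum.elim w fun _ => (0:ℝ)) (eta' s))
            (nuG (Sum.elim w fun _ => (0:ℝ)) (h' s)))) ∧
    (chiN (NPLev w eta h) δ₀ = chiN (NPLev w eta' h') δ₀ ∧
      ∀ s : ℕ, chiN (NPLev w eta h) δ₀ ≤ s →
        lamN (NPLev w eta h) (s : ℤ) = lamN (NPLev w eta' h') (s : ℤ)) ∧
    (∀ s : ℕ, chiN (NPLev w eta h) δ₀ ≤ s →
      ∀ e : Idx r l →₀ ℕ, (∀ j : Fin l, e (Sum.inr j) = 0) →
        ((wtG (Sum.elim w fun _ => (0:ℝ)) e : ℝ) : EReal) = lamN (NPLev w eta h) (s : ℤ) →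
        (∀ i : Fin r,
          MvPowerSeries.coeff e (eta s (Sum.inl i)) =
            MvPowerSeries.coeff e (eta' s (Sum.inl i))) ∧
        MvPowerSeries.coeff e (h s) = MvPowerSeries.coeff e (h' s)) := by
  set W : Idx r l → ℝ := Sum.elim w fun _ => 0
  have hW₀ : ∀ b, 0 ≤ W b := by rintro (i | j); exacts [(hw i).le, le_rfl]
  have hW : ∀ b : Idx r l, b.isLeft = false → W b = 0 := by
    rintro (i | j) hb
    exacts [absurd hb (by simp), rfl]
  have hS : IsLevelShift (fun u : Idx r l => u.isLeft) f eta eta' h h' := ⟨hh0, heta', hh'⟩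
  set ν := fun s => wtInf W (levelSupport eta h s)
  set ν' := fun s => wtInf W (levelSupport eta' h' s)
  have hν : ∀ s, 0 ≤ ν s := fun _ => wtInf_nonneg hW₀
  have hν' : ∀ s, 0 ≤ ν' s := fun _ => wtInf_nonneg hW₀
  have hfin : ∃ s, ν s ≠ ⊤ := exists_wtInf_levelSupport_ne_top hω
  have hpart1 : ∀ δ : ℝ, 0 < δ → δ ≤ δ₀ →
      ⨅ s : ℕ, ((s * δ : ℝ) : EReal) + ν s = ⨅ s : ℕ, ((s * δ : ℝ) : EReal) + ν' s :=
    fun δ hδ hδδ₀ => le_antisymm (iInf_le_iInf_shift hW hf hS hδδ₀)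
      (iInf_shift_le hW₀ hW hf hS hδ hδδ₀ hfin)
  have hfin' : ∃ s, ν' s ≠ ⊤ :=
    iInf_coe_add_lt_top_iff.1 (hpart1 δ₀ hδ₀ le_rfl ▸ iInf_coe_add_lt_top_iff.2 hfin)
  have hσ : ∀ δ ∈ Set.Ioc 0 δ₀, sigN (polygonOf ν) δ = sigN (polygonOf ν') δ := fun δ hδ => by
    rw [sigN_polygonOf hν hδ.1.le, sigN_polygonOf hν' hδ.1.le, hpart1 δ hδ.1 hδ.2]
  simp only [min_nu1G_nuG_eq_wtInf, NPLev_eq_polygonOf]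
  refine ⟨hpart1, chiN_eq_and_lamN_eq_of_sigN_eq hν hfin hν' hfin' hδ₀ hσ, fun s hs e _ he => ?_⟩
  obtain ⟨hη, hh⟩ := coeff_shift_eq_of_wtG_eq_lamN hW₀ hW hf hS hδ₀ hfin hs he
  exact ⟨fun i => (hη (Sum.inl i)).symm, hh.symm⟩

/-- invariance of the critical values `ς_δ` (`δ ≤ δ₀`), of the critical
height, of the abscissas above it, and of the reduced vectors of the levels above the
critical height, under the coordinate change `z' = z + f` with `ν_A(f) ≥ δ₀`. -/
theorem statement13 {k : Type} [Field k] [CharZero k] {r l : ℕ} (hr : 0 < r)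
    (w : Fin r → ℝ) (hw : ∀ i, 0 < w i) (hind : LinearIndependent ℚ w)
    (eta eta' : ℕ → Idx r l → MvPowerSeries (Idx r l) k)
    (h h' : ℕ → MvPowerSeries (Idx r l) k) (hh0 : h 0 = 0)
    (hω : ∃ s, (∃ b, eta s b ≠ 0) ∨ h s ≠ 0)
    (f : MvPowerSeries (Idx r l) k) (δ₀ : ℝ) (hδ₀ : 0 < δ₀)
    (hf : (δ₀ : EReal) ≤ nuG (Sum.elim w fun _ => (0:ℝ)) f)
    (heta' : ∀ (s : ℕ) (b : Idx r l) (e : Idx r l →₀ ℕ),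
      MvPowerSeries.coeff e (eta' s b) =
        (finsum fun t : ℕ => if s ≤ t then
            (Nat.choose t s : k) * MvPowerSeries.coeff e ((-f) ^ (t - s) * eta t b)
          else 0)
        - (finsum fun t : ℕ => if s + 1 ≤ t then
            (Nat.choose (t - 1) s : k) *
              MvPowerSeries.coeff e
                ((-f) ^ (t - s - 1) * (h t * DopG (fun u => u.isLeft) b f))
          else 0))
    (hh' : ∀ (s : ℕ) (e : Idx r l →₀ ℕ),
      MvPowerSeries.coeff e (h' s) =
        finsum fun t : ℕ => if 1 ≤ s ∧ s ≤ t then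
            (Nat.choose (t - 1) (s - 1) : k) *
              MvPowerSeries.coeff e ((-f) ^ (t - s) * h t)
          else 0) :
    (∀ δ : ℝ, 0 < δ → δ ≤ δ₀ →
      (⨅ s : ℕ, (((s * δ : ℝ)) : EReal) +
          min (nu1G (Sum.elim w fun _ => (0:ℝ)) (eta s))
            (nuG (Sum.elim w fun _ => (0:ℝ)) (h s))) =
      (⨅ s : ℕ, (((s * δ : ℝ)) : EReal) +
          min (nu1G (Sum.elim w fun _ => (0:ℝ)) (eta' s))
            (nuG (Sum.elim w fun _ => (0:ℝ)) (h' s)))) ∧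
    (chiN (NPLev w eta h) δ₀ = chiN (NPLev w eta' h') δ₀ ∧
      ∀ s : ℕ, chiN (NPLev w eta h) δ₀ ≤ s →
        lamN (NPLev w eta h) (s : ℤ) = lamN (NPLev w eta' h') (s : ℤ)) ∧
    (∀ s : ℕ, chiN (NPLev w eta h) δ₀ ≤ s →
      ∀ e : Idx r l →₀ ℕ, (∀ j : Fin l, e (Sum.inr j) = 0) →
        ((wtG (Sum.elim w fun _ => (0:ℝ)) e : ℝ) : EReal) = lamN (NPLev w eta h) (s : ℤ) →
        (∀ i : Fin r,
          MvPowerSeries.coeff e (eta s (Sum.inl i)) =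
            MvPowerSeries.coeff e (eta' s (Sum.inl i))) ∧
        MvPowerSeries.coeff e (h s) = MvPowerSeries.coeff e (h' s)) :=
  statement13_general w hw eta eta' h h' hh0 hω f δ₀ hδ₀ hf heta' hh'
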